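/- Let L be GF or FO². There is a polynomial-time reduction of explicit L-definability to L-interpolant existence: given an L-sentence φ, L-formula θ(x), and signature τ, there is an explicit L(τ)-definition of θ under φ if and only if there exists an L-interpolant for the pair (φ ∧ θ(x), φ′ → θ′(x)), where φ′ and θ′ are obtained from φ and θ by renaming every relation symbol not in τ to a fresh symbol of the same arity. -/

import Mathlib

/-!
An explicit `τ`-definition `ψ` of `θ`, with the symbols outside `sig φ ∪ sig θ` interpreted as
empty, is an interpolant: it follows from `φ ∧ θ`, and a model of `ψ ∧ φ'` read backwards
through the renaming is a model of `φ` with the same `τ`-part, hence of `θ`, so it satisfies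
`θ'`. Conversely, an interpolant only mentions symbols common to `sig φ ∪ sig θ` and its renamed
copy, which by freshness lie in `τ`; and a model of `φ` and the interpolant, with each `ρ R`
reinterpreted as `R`, is a model of `φ'` and the interpolant, hence of `θ'`, so it satisfies `θ`.
Only two properties of GF and FO² enter: truth depends only on the symbols a formula mentions,
and satisfying a renamed formula is satisfying the original in the structure read along `ρ`.
-/

/-- A relational signature: relation symbols with arities, no function or
constant symbols. -/
structure Sig : Type 1 where
  Rel : Type
  arity : Rel → ℕ

/-- A relational structure for a signature. -/
structure Str (σ : Sig) : Type 1 where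
  dom : Type
  interp : (R : σ.Rel) → (Fin (σ.arity R) → dom) → Prop

/-- Update an assignment on all variables occurring in the list `ys`. -/
def updOn {D : Type} (v : ℕ → D) (ys : List ℕ) (w : ℕ → D) : ℕ → D :=
  fun n => if n ∈ ys then w n else v n

/-- `a ↦ b` is a partial `τ`-isomorphism between the tuples `a` (in `A`) and
`b` (in `B`). -/
def PartialIso {σ : Sig} (τ : Set σ.Rel) (A B : Str σ) {n : ℕ}
    (a : Fin n → A.dom) (b : Fin n → B.dom) : Prop :=
  (∀ i j : Fin n, a i = a j ↔ b i = b j) ∧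
  ∀ R ∈ τ, ∀ t : Fin (σ.arity R) → Fin n, A.interp R (a ∘ t) ↔ B.interp R (b ∘ t)

/-- Atomic formulas over named variables. -/
inductive Atomic (σ : Sig) : Type
  | eq : ℕ → ℕ → Atomic σ
  | rel : (R : σ.Rel) → (Fin (σ.arity R) → ℕ) → Atomic σ

namespace Atomic

def Sat {σ : Sig} (A : Str σ) : Atomic σ → (ℕ → A.dom) → Prop
  | .eq i j, v => v i = v j
  | .rel R t, v => A.interp R (fun k => v (t k))

def vars {σ : Sig} : Atomic σ → Finset ℕ
  | .eq i j => {i, j}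
  | .rel _ t => Finset.image t Finset.univ

def sig {σ : Sig} : Atomic σ → Set σ.Rel
  | .eq _ _ => ∅
  | .rel R _ => {R}

end Atomic

/-- Syntax of the guarded fragment: Boolean connectives and guarded
quantifiers `∃ ys (α ∧ φ)` and `∀ ys (α → φ)`. -/
inductive GF (σ : Sig) : Type
  | atom : Atomic σ → GF σ
  | not : GF σ → GF σ
  | and : GF σ → GF σ → GF σ
  | or : GF σ → GF σ → GF σ
  | gex : List ℕ → Atomic σ → GF σ → GF σ
  | gall : List ℕ → Atomic σ → GF σ → GF σ

namespace GF

def Sat {σ : Sig} (A : Str σ) : GF σ → (ℕ → A.dom) → Prop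
  | .atom α, v => α.Sat A v
  | .not φ, v => ¬ Sat A φ v
  | .and φ ψ, v => Sat A φ v ∧ Sat A ψ v
  | .or φ ψ, v => Sat A φ v ∨ Sat A ψ v
  | .gex ys α φ, v => ∃ w, α.Sat A (updOn v ys w) ∧ Sat A φ (updOn v ys w)
  | .gall ys α φ, v => ∀ w, α.Sat A (updOn v ys w) → Sat A φ (updOn v ys w)

/-- Free variables. -/
def fv {σ : Sig} : GF σ → Finset ℕ
  | .atom α => α.vars
  | .not φ => fv φ
  | .and φ ψ => fv φ ∪ fv ψ
  | .or φ ψ => fv φ ∪ fv ψ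
  | .gex ys α φ => (α.vars ∪ fv φ).filter (fun m => m ∉ ys)
  | .gall ys α φ => (α.vars ∪ fv φ).filter (fun m => m ∉ ys)

/-- The signature (set of relation symbols) of a formula. -/
def sig {σ : Sig} : GF σ → Set σ.Rel
  | .atom α => α.sig
  | .not φ => sig φ
  | .and φ ψ => sig φ ∪ sig ψ
  | .or φ ψ => sig φ ∪ sig ψ
  | .gex _ α φ => α.sig ∪ sig φ
  | .gall _ α φ => α.sig ∪ sig φ

/-- The guard of each quantifier contains all free variables of the formula in
its scope. -/
def WellGuarded {σ : Sig} : GF σ → Prop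
  | .atom _ => True
  | .not φ => WellGuarded φ
  | .and φ ψ => WellGuarded φ ∧ WellGuarded ψ
  | .or φ ψ => WellGuarded φ ∧ WellGuarded ψ
  | .gex _ α φ => fv φ ⊆ α.vars ∧ WellGuarded φ
  | .gall _ α φ => fv φ ⊆ α.vars ∧ WellGuarded φ

end GF

/-- A `τ`-guarded set: a singleton or the set of components of a tuple in the
interpretation of some `R ∈ τ`. -/
def GuardedSet {σ : Sig} (τ : Set σ.Rel) (A : Str σ) (G : Set A.dom) : Prop :=
  (∃ a, G = {a}) ∨ ∃ R ∈ τ, ∃ t : Fin (σ.arity R) → A.dom, A.interp R t ∧ G = Set.range t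

/-- A `τ`-guarded tuple: all components lie in some `τ`-guarded set. -/
def GuardedTuple {σ : Sig} (τ : Set σ.Rel) (A : Str σ) {n : ℕ} (a : Fin n → A.dom) : Prop :=
  ∃ G, GuardedSet τ A G ∧ ∀ i, a i ∈ G

/-- A pair of tuples of the same length in `A` and `B`, representing the
partial map sending the first tuple to the second. -/
def TuplePair {σ : Sig} (A B : Str σ) : Type :=
  Σ n : ℕ, (Fin n → A.dom) × (Fin n → B.dom)

/-- The back-and-forth conditions for the pair `a ↦ b` relative to a set `I`
of tuple pairs. -/
def ForthBack {σ : Sig} (τ : Set σ.Rel) (A B : Str σ) (I : Set (TuplePair A B))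
    {n : ℕ} (a : Fin n → A.dom) (b : Fin n → B.dom) : Prop :=
  (∀ (m : ℕ) (a' : Fin m → A.dom), GuardedTuple τ A a' →
    ∃ b' : Fin m → B.dom, (⟨m, a', b'⟩ : TuplePair A B) ∈ I ∧
      ∀ i j, a i = a' j → b i = b' j) ∧
  (∀ (m : ℕ) (b' : Fin m → B.dom), GuardedTuple τ B b' →
    ∃ a' : Fin m → A.dom, (⟨m, a', b'⟩ : TuplePair A B) ∈ I ∧
      ∀ i j, b i = b' j → a i = a' j)

/-- `I` is a GF(τ)-bisimulation between `A` and `B`. -/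
def IsGFBisim {σ : Sig} (τ : Set σ.Rel) (A B : Str σ) (I : Set (TuplePair A B)) : Prop :=
  ∀ p ∈ I, GuardedTuple τ A p.2.1 ∧ GuardedTuple τ B p.2.2 ∧
    PartialIso τ A B p.2.1 p.2.2 ∧ ForthBack τ A B I p.2.1 p.2.2

/-- `(A, a) ∼_{GF,τ} (B, b)`. -/
def GFBisimilar {σ : Sig} (τ : Set σ.Rel) (A B : Str σ) {n : ℕ}
    (a : Fin n → A.dom) (b : Fin n → B.dom) : Prop :=
  ∃ I, IsGFBisim τ A B I ∧ PartialIso τ A B a b ∧ ForthBack τ A B I a b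

/-- The pointed structure `(A, a)` satisfies `φ` (the tuple `a` is assigned to
the variables `0, …, n-1`). -/
def SatTupleGF {σ : Sig} (A : Str σ) (φ : GF σ) {n : ℕ} (a : Fin n → A.dom) : Prop :=
  ∀ v : ℕ → A.dom, (∀ i : Fin n, v i = a i) → φ.Sat A v

/-- `(A, a)` and `(B, b)` satisfy exactly the same GF(τ)-formulas. -/
def GFEquiv {σ : Sig} (τ : Set σ.Rel) (A B : Str σ) {n : ℕ}
    (a : Fin n → A.dom) (b : Fin n → B.dom) : Prop :=
  ∀ φ : GF σ, φ.WellGuarded → φ.sig ⊆ τ → φ.fv ⊆ Finset.range n →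
    (SatTupleGF A φ a ↔ SatTupleGF B φ b)

/-- Semantic entailment for GF formulas. -/
def GFEnt {σ : Sig} (φ ψ : GF σ) : Prop :=
  ∀ (A : Str σ) (v : ℕ → A.dom), φ.Sat A v → ψ.Sat A v

/-- Joint GF(τ)-consistency of two formulas with free variables among
`0, …, n-1`. -/
def JointGFCon {σ : Sig} (τ : Set σ.Rel) (n : ℕ) (φ ψ : GF σ) : Prop :=
  ∃ (A B : Str σ) (a : Fin n → A.dom) (b : Fin n → B.dom),
    SatTupleGF A φ a ∧ SatTupleGF B ψ b ∧ GFBisimilar τ A B a b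

/-- Syntax of first-order formulas over named variables (relational
signature). -/
inductive Fml (σ : Sig) : Type
  | eq : ℕ → ℕ → Fml σ
  | rel : (R : σ.Rel) → (Fin (σ.arity R) → ℕ) → Fml σ
  | not : Fml σ → Fml σ
  | and : Fml σ → Fml σ → Fml σ
  | or : Fml σ → Fml σ → Fml σ
  | ex : ℕ → Fml σ → Fml σ
  | all : ℕ → Fml σ → Fml σ

namespace Fml

def Sat {σ : Sig} (A : Str σ) : Fml σ → (ℕ → A.dom) → Prop
  | .eq i j, v => v i = v j
  | .rel R t, v => A.interp R (fun k => v (t k))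
  | .not φ, v => ¬ Sat A φ v
  | .and φ ψ, v => Sat A φ v ∧ Sat A ψ v
  | .or φ ψ, v => Sat A φ v ∨ Sat A ψ v
  | .ex x φ, v => ∃ d, Sat A φ (Function.update v x d)
  | .all x φ, v => ∀ d, Sat A φ (Function.update v x d)

/-- Free variables. -/
def fv {σ : Sig} : Fml σ → Finset ℕ
  | .eq i j => {i, j}
  | .rel _ t => Finset.image t Finset.univ
  | .not φ => fv φ
  | .and φ ψ => fv φ ∪ fv ψ
  | .or φ ψ => fv φ ∪ fv ψ
  | .ex x φ => (fv φ).erase x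
  | .all x φ => (fv φ).erase x

/-- All (free and bound) variables. -/
def allVars {σ : Sig} : Fml σ → Finset ℕ
  | .eq i j => {i, j}
  | .rel _ t => Finset.image t Finset.univ
  | .not φ => allVars φ
  | .and φ ψ => allVars φ ∪ allVars ψ
  | .or φ ψ => allVars φ ∪ allVars ψ
  | .ex x φ => insert x (allVars φ)
  | .all x φ => insert x (allVars φ)

/-- The signature of a formula. -/
def sig {σ : Sig} : Fml σ → Set σ.Rel
  | .eq _ _ => ∅
  | .rel R _ => {R}
  | .not φ => sig φ
  | .and φ ψ => sig φ ∪ sig ψ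
  | .or φ ψ => sig φ ∪ sig ψ
  | .ex _ φ => sig φ
  | .all _ φ => sig φ

/-- Size of a formula. -/
def size {σ : Sig} : Fml σ → ℕ
  | .eq _ _ => 1
  | .rel R _ => 1 + σ.arity R
  | .not φ => size φ + 1
  | .and φ ψ => size φ + size ψ + 1
  | .or φ ψ => size φ + size ψ + 1
  | .ex _ φ => size φ + 1
  | .all _ φ => size φ + 1

/-- Quantifier-free formulas. -/
def QFree {σ : Sig} : Fml σ → Prop
  | .eq _ _ => True
  | .rel _ _ => True
  | .not φ => QFree φ
  | .and φ ψ => QFree φ ∧ QFree ψ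
  | .or φ ψ => QFree φ ∧ QFree ψ
  | .ex _ _ => False
  | .all _ _ => False

end Fml

/-- A two-variable formula: it uses only the two variables `0` ("x") and
`1` ("y"). -/
def IsFO2 {σ : Sig} (φ : Fml σ) : Prop := φ.allVars ⊆ {0, 1}

/-- The pointed structure `(A, a)` satisfies `φ` (the tuple `a` is assigned to
the variables `0, …, n-1`). -/
def SatTupleF {σ : Sig} (A : Str σ) (φ : Fml σ) {n : ℕ} (a : Fin n → A.dom) : Prop :=
  ∀ v : ℕ → A.dom, (∀ i : Fin n, v i = a i) → φ.Sat A v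

/-- Semantic entailment. -/
def FOEnt {σ : Sig} (φ ψ : Fml σ) : Prop :=
  ∀ (A : Str σ) (v : ℕ → A.dom), φ.Sat A v → ψ.Sat A v

/-- `S` is an FO²(τ)-bisimulation between `A` and `B`. -/
def FO2Bisim {σ : Sig} (τ : Set σ.Rel) (A B : Str σ) (S : Set (A.dom × B.dom)) : Prop :=
  (∀ a : A.dom, ∃ b, (a, b) ∈ S) ∧ (∀ b : B.dom, ∃ a, (a, b) ∈ S) ∧
  ∀ p ∈ S,
    (∀ a' : A.dom, ∃ b' : B.dom,
      PartialIso τ A B ![p.1, a'] ![p.2, b'] ∧ (a', b') ∈ S) ∧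
    (∀ b' : B.dom, ∃ a' : A.dom,
      PartialIso τ A B ![p.1, a'] ![p.2, b'] ∧ (a', b') ∈ S)

/-- `(A, a) ∼_{FO²,τ} (B, b)` for tuples of equal length. -/
def FO2Bisimilar {σ : Sig} (τ : Set σ.Rel) (A B : Str σ) {n : ℕ}
    (a : Fin n → A.dom) (b : Fin n → B.dom) : Prop :=
  PartialIso τ A B a b ∧ ∃ S, FO2Bisim τ A B S ∧ ∀ i, (a i, b i) ∈ S

/-- `(A, a)` and `(B, b)` satisfy exactly the same FO²(τ)-formulas. -/
def FO2Equiv {σ : Sig} (τ : Set σ.Rel) (A B : Str σ) {n : ℕ}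
    (a : Fin n → A.dom) (b : Fin n → B.dom) : Prop :=
  ∀ φ : Fml σ, IsFO2 φ → φ.sig ⊆ τ → φ.fv ⊆ Finset.range n →
    (SatTupleF A φ a ↔ SatTupleF B φ b)

/-- Joint FO²(τ)-consistency of two formulas with free variables among
`0, …, n-1`. -/
def JointFO2Con {σ : Sig} (τ : Set σ.Rel) (n : ℕ) (φ ψ : Fml σ) : Prop :=
  ∃ (A B : Str σ) (a : Fin n → A.dom) (b : Fin n → B.dom),
    SatTupleF A φ a ∧ SatTupleF B ψ b ∧ FO2Bisimilar τ A B a b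

/-- Existence of a GF-interpolant for `φ, ψ` (free variables among
`0, …, n-1`). -/
def HasGFInterpolant {σ : Sig} (n : ℕ) (φ ψ : GF σ) : Prop :=
  ∃ θ : GF σ, θ.WellGuarded ∧ θ.sig ⊆ φ.sig ∩ ψ.sig ∧
    θ.fv ⊆ Finset.range n ∧ GFEnt φ θ ∧ GFEnt θ ψ

/-- Existence of an FO²-interpolant for `φ, ψ` (free variables among
`0, …, n-1`). -/
def HasFO2Interpolant {σ : Sig} (n : ℕ) (φ ψ : Fml σ) : Prop :=
  ∃ θ : Fml σ, IsFO2 θ ∧ θ.sig ⊆ φ.sig ∩ ψ.sig ∧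
    θ.fv ⊆ Finset.range n ∧ FOEnt φ θ ∧ FOEnt θ ψ

/-- `θ` has an explicit GF(τ)-definition under the sentence `φ` (free
variables of the definition among `0, …, n-1`). -/
def HasExplicitGFDef {σ : Sig} (τ : Set σ.Rel) (n : ℕ) (φ θ : GF σ) : Prop :=
  ∃ ψ : GF σ, ψ.WellGuarded ∧ ψ.sig ⊆ τ ∧ ψ.fv ⊆ Finset.range n ∧
    ∀ (A : Str σ) (v : ℕ → A.dom), φ.Sat A v → (θ.Sat A v ↔ ψ.Sat A v)

/-- `θ` has an explicit FO²(τ)-definition under the sentence `φ`. -/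
def HasExplicitFO2Def {σ : Sig} (τ : Set σ.Rel) (n : ℕ) (φ θ : Fml σ) : Prop :=
  ∃ ψ : Fml σ, IsFO2 ψ ∧ ψ.sig ⊆ τ ∧ ψ.fv ⊆ Finset.range n ∧
    ∀ (A : Str σ) (v : ℕ → A.dom), φ.Sat A v → (θ.Sat A v ↔ ψ.Sat A v)

/-- Rename relation symbols in an atomic formula along an arity-preserving
map `ρ`. -/
def Atomic.rename {σ : Sig} (ρ : σ.Rel → σ.Rel)
    (h : ∀ R, σ.arity (ρ R) = σ.arity R) : Atomic σ → Atomic σ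
  | .eq i j => .eq i j
  | .rel R t => .rel (ρ R) (fun k => t (Fin.cast (h R) k))

/-- Rename relation symbols in a GF formula. -/
def GF.rename {σ : Sig} (ρ : σ.Rel → σ.Rel)
    (h : ∀ R, σ.arity (ρ R) = σ.arity R) : GF σ → GF σ
  | .atom α => .atom (α.rename ρ h)
  | .not φ => .not (φ.rename ρ h)
  | .and φ ψ => .and (φ.rename ρ h) (ψ.rename ρ h)
  | .or φ ψ => .or (φ.rename ρ h) (ψ.rename ρ h)
  | .gex ys α φ => .gex ys (α.rename ρ h) (φ.rename ρ h)
  | .gall ys α φ => .gall ys (α.rename ρ h) (φ.rename ρ h)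

/-- Rename relation symbols in a first-order formula. -/
def Fml.rename {σ : Sig} (ρ : σ.Rel → σ.Rel)
    (h : ∀ R, σ.arity (ρ R) = σ.arity R) : Fml σ → Fml σ
  | .eq i j => .eq i j
  | .rel R t => .rel (ρ R) (fun k => t (Fin.cast (h R) k))
  | .not φ => .not (φ.rename ρ h)
  | .and φ ψ => .and (φ.rename ρ h) (ψ.rename ρ h)
  | .or φ ψ => .or (φ.rename ρ h) (ψ.rename ρ h)
  | .ex x φ => .ex x (φ.rename ρ h)
  | .all x φ => .all x (φ.rename ρ h)

namespace Str

variable {σ : Sig}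

def restrict (K : Set σ.Rel) (A : Str σ) : Str σ :=
  ⟨A.dom, fun R t => R ∈ K ∧ A.interp R t⟩

def comap (ρ : σ.Rel → σ.Rel) (h : ∀ R, σ.arity (ρ R) = σ.arity R) (A : Str σ) : Str σ :=
  ⟨A.dom, fun R t => A.interp (ρ R) (fun k => t (Fin.cast (h R) k))⟩

def map (ρ : σ.Rel → σ.Rel) (h : ∀ R, σ.arity (ρ R) = σ.arity R) (A : Str σ) : Str σ :=
  ⟨A.dom, fun S t => ∃ R, ∃ e : ρ R = S,
    A.interp R (fun k => t (Fin.cast ((h R).symm.trans (congrArg σ.arity e)) k))⟩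

variable {ρ : σ.Rel → σ.Rel} {h : ∀ R, σ.arity (ρ R) = σ.arity R}

theorem comap_interp_of_fixed (A : Str σ) {R : σ.Rel} (e : ρ R = R)
    (t : Fin (σ.arity R) → A.dom) : (A.comap ρ h).interp R t ↔ A.interp R t := by
  have key : ∀ S (_ : S = R) (p : σ.arity S = σ.arity R),
      A.interp S (fun k => t (Fin.cast p k)) ↔ A.interp R t := by
    rintro S rfl p
    rfl
  exact key (ρ R) e (h R)

theorem map_interp_of_fixed (hinj : Function.Injective ρ) (A : Str σ) {R : σ.Rel}
    (e : ρ R = R) (t : Fin (σ.arity R) → A.dom) : (A.map ρ h).interp R t ↔ A.interp R t := by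
  constructor
  · rintro ⟨R', e', hR'⟩
    obtain rfl := hinj (e'.trans e.symm)
    exact hR'
  · exact fun hR => ⟨R, e, hR⟩

theorem comap_map_interp (hinj : Function.Injective ρ) (A : Str σ) (R : σ.Rel)
    (t : Fin (σ.arity R) → A.dom) : ((A.map ρ h).comap ρ h).interp R t ↔ A.interp R t := by
  constructor
  · rintro ⟨R', e, hR'⟩
    obtain rfl := hinj e
    exact hR'
  · exact fun hR => ⟨R, rfl, hR⟩

end Str

theorem Set.inter_image_subset_of_fresh {α : Type*} {ρ : α → α} {K τ : Set α}
    (hρτ : ∀ R ∈ τ, ρ R = R) (hfresh : ∀ R ∉ τ, ρ R ∉ K) : K ∩ ρ '' K ⊆ τ := by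
  rintro _ ⟨hK, R, -, rfl⟩
  by_contra hR
  by_cases hRτ : R ∈ τ
  · exact hR ((hρτ R hRτ).symm ▸ hRτ)
  · exact hfresh R hRτ hK

theorem Set.inter_subset_inter_image_of_fixed {α : Type*} {ρ : α → α} {K τ : Set α}
    (hρτ : ∀ R ∈ τ, ρ R = R) : τ ∩ K ⊆ K ∩ ρ '' K :=
  fun R ⟨hτ, hK⟩ => ⟨hK, R, hK, hρτ R hτ⟩

structure AbstractLogic (σ : Sig) where
  Form : Type
  Sat : (A : Str σ) → Form → (ℕ → A.dom) → Prop
  sig : Form → Set σ.Rel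
  rename : (ρ : σ.Rel → σ.Rel) → (∀ R, σ.arity (ρ R) = σ.arity R) → Form → Form
  sat_congr : ∀ (A : Str σ) (J : ∀ R, (Fin (σ.arity R) → A.dom) → Prop) (φ : Form)
    (v : ℕ → A.dom), (∀ R ∈ sig φ, ∀ t, A.interp R t ↔ J R t) →
      (Sat A φ v ↔ Sat ⟨A.dom, J⟩ φ v)
  sat_rename : ∀ ρ h (A : Str σ) φ v, Sat A (rename ρ h φ) v ↔ Sat (A.comap ρ h) φ v

namespace AbstractLogic

variable {σ : Sig} (L : AbstractLogic σ) {τ : Set σ.Rel} {ρ : σ.Rel → σ.Rel}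
  {h : ∀ R, σ.arity (ρ R) = σ.arity R}

theorem sat_restrict_iff {K : Set σ.Rel} {φ : L.Form} (hφ : L.sig φ ⊆ K) (A : Str σ)
    (v : ℕ → A.dom) : L.Sat (A.restrict K) φ v ↔ L.Sat A φ v :=
  (L.sat_congr A _ φ v fun _ hR _ => (and_iff_right (hφ hR)).symm).symm

theorem sat_restrict_of_explicitDef {φ θ ψ : L.Form}
    (hψ : ∀ (A : Str σ) v, L.Sat A φ v → (L.Sat A θ v ↔ L.Sat A ψ v)) {K : Set σ.Rel}
    (hK : L.sig φ ∪ L.sig θ ⊆ K) {A : Str σ} {v : ℕ → A.dom} (hφ : L.Sat A φ v)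
    (hθ : L.Sat A θ v) : L.Sat (A.restrict K) ψ v :=
  have hφK := Set.union_subset_iff.1 hK
  (hψ (A.restrict K) v ((L.sat_restrict_iff hφK.1 A v).2 hφ)).1
    ((L.sat_restrict_iff hφK.2 A v).2 hθ)

/-- `A.comap ρ h` agrees with `A` on `τ ⊇ sig ψ`, so after restriction to `K` it satisfies `ψ`
and `φ`, hence `θ`. -/
theorem sat_rename_of_explicitDef (hρτ : ∀ R ∈ τ, ρ R = R) {φ θ ψ : L.Form}
    (hψτ : L.sig ψ ⊆ τ) (hψ : ∀ (A : Str σ) v, L.Sat A φ v → (L.Sat A θ v ↔ L.Sat A ψ v))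
    {K : Set σ.Rel} (hK : L.sig φ ∪ L.sig θ ⊆ K) {A : Str σ} {v : ℕ → A.dom}
    (hψK : L.Sat (A.restrict K) ψ v) (hφ : L.Sat A (L.rename ρ h φ) v) :
    L.Sat A (L.rename ρ h θ) v := by
  rw [L.sat_rename] at hφ ⊢
  have hψ' : L.Sat ((A.comap ρ h).restrict K) ψ v :=
    (L.sat_congr (A.restrict K) ((A.comap ρ h).restrict K).interp ψ v fun R hR t =>
      and_congr_right fun _ => (Str.comap_interp_of_fixed A (hρτ R (hψτ hR)) t).symm).1 hψK
  have hφK := Set.union_subset_iff.1 hK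
  have hθ := (hψ ((A.comap ρ h).restrict K) v
    ((L.sat_restrict_iff hφK.1 (A.comap ρ h) v).2 hφ)).2 hψ'
  exact (L.sat_restrict_iff hφK.2 (A.comap ρ h) v).1 hθ

/-- `A.map ρ h` satisfies `χ` (it agrees with `A` on `τ`) and `φ'` (its `comap` is `A`),
hence `θ'`, i.e. `A` satisfies `θ`. -/
theorem sat_of_interpolant (hρτ : ∀ R ∈ τ, ρ R = R) (hinj : Function.Injective ρ)
    {φ θ χ : L.Form} (hχτ : L.sig χ ⊆ τ)
    (hχ : ∀ (B : Str σ) v, L.Sat B χ v → ¬ L.Sat B (L.rename ρ h φ) v ∨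
      L.Sat B (L.rename ρ h θ) v)
    {A : Str σ} {v : ℕ → A.dom} (hφ : L.Sat A φ v) (hχA : L.Sat A χ v) : L.Sat A θ v := by
  have hcomap : ∀ ψ, L.Sat ((A.map ρ h).comap ρ h) ψ v ↔ L.Sat A ψ v := fun ψ =>
    (L.sat_congr A ((A.map ρ h).comap ρ h).interp ψ v fun R _ t =>
      (Str.comap_map_interp hinj A R t).symm).symm
  have hχ' : L.Sat (A.map ρ h) χ v :=
    (L.sat_congr A (A.map ρ h).interp χ v fun R hR t =>
      (Str.map_interp_of_fixed hinj A (hρτ R (hχτ hR)) t).symm).1 hχA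
  have hφ' : L.Sat (A.map ρ h) (L.rename ρ h φ) v :=
    (L.sat_rename ρ h (A.map ρ h) φ v).2 ((hcomap φ).2 hφ)
  have hθ' := (hχ (A.map ρ h) v hχ').resolve_left (not_not.2 hφ')
  exact (hcomap θ).1 ((L.sat_rename ρ h (A.map ρ h) θ v).1 hθ')

end AbstractLogic

namespace Atomic

variable {σ : Sig}

theorem sat_congr (A : Str σ) (J : ∀ R, (Fin (σ.arity R) → A.dom) → Prop) (α : Atomic σ)
    (v : ℕ → A.dom) (hJ : ∀ R ∈ α.sig, ∀ t, A.interp R t ↔ J R t) :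
    α.Sat A v ↔ α.Sat ⟨A.dom, J⟩ v := by
  cases α with
  | eq i j => rfl
  | rel R t => exact hJ R rfl _

theorem sat_rename (ρ : σ.Rel → σ.Rel) (h : ∀ R, σ.arity (ρ R) = σ.arity R) (A : Str σ)
    (α : Atomic σ) (v : ℕ → A.dom) : (α.rename ρ h).Sat A v ↔ α.Sat (A.comap ρ h) v := by
  cases α <;> rfl

theorem sig_rename (ρ : σ.Rel → σ.Rel) (h : ∀ R, σ.arity (ρ R) = σ.arity R) (α : Atomic σ) :
    (α.rename ρ h).sig = ρ '' α.sig := by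
  cases α <;> simp [rename, sig]

end Atomic

namespace GF

variable {σ : Sig}

theorem sat_congr (A : Str σ) (J : ∀ R, (Fin (σ.arity R) → A.dom) → Prop) (φ : GF σ)
    (v : ℕ → A.dom) (hJ : ∀ R ∈ φ.sig, ∀ t, A.interp R t ↔ J R t) :
    φ.Sat A v ↔ φ.Sat ⟨A.dom, J⟩ v := by
  induction φ generalizing v with
  | atom α => exact α.sat_congr A J v hJ
  | not φ ih => exact not_congr (ih v hJ)
  | and φ ψ ihφ ihψ =>
    exact and_congr (ihφ v fun R hR => hJ R (.inl hR)) (ihψ v fun R hR => hJ R (.inr hR))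
  | or φ ψ ihφ ihψ =>
    exact or_congr (ihφ v fun R hR => hJ R (.inl hR)) (ihψ v fun R hR => hJ R (.inr hR))
  | gex ys α φ ih =>
    exact exists_congr fun w => and_congr (α.sat_congr A J _ fun R hR => hJ R (.inl hR))
      (ih _ fun R hR => hJ R (.inr hR))
  | gall ys α φ ih =>
    exact forall_congr' fun w => imp_congr (α.sat_congr A J _ fun R hR => hJ R (.inl hR))
      (ih _ fun R hR => hJ R (.inr hR))

theorem sat_rename (ρ : σ.Rel → σ.Rel) (h : ∀ R, σ.arity (ρ R) = σ.arity R) (A : Str σ)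
    (φ : GF σ) (v : ℕ → A.dom) : (φ.rename ρ h).Sat A v ↔ φ.Sat (A.comap ρ h) v := by
  induction φ generalizing v with
  | atom α => exact α.sat_rename ρ h A v
  | not φ ih => exact not_congr (ih v)
  | and φ ψ ihφ ihψ => exact and_congr (ihφ v) (ihψ v)
  | or φ ψ ihφ ihψ => exact or_congr (ihφ v) (ihψ v)
  | gex ys α φ ih => exact exists_congr fun w => and_congr (α.sat_rename ρ h A _) (ih _)
  | gall ys α φ ih => exact forall_congr' fun w => imp_congr (α.sat_rename ρ h A _) (ih _)

theorem sig_rename (ρ : σ.Rel → σ.Rel) (h : ∀ R, σ.arity (ρ R) = σ.arity R) (φ : GF σ) :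
    (φ.rename ρ h).sig = ρ '' φ.sig := by
  induction φ <;> simp [rename, sig, Set.image_union, Atomic.sig_rename, *]

variable (σ) in
def abstractLogic : AbstractLogic σ where
  Form := GF σ
  Sat A φ v := φ.Sat A v
  sig := sig
  rename := rename
  sat_congr := sat_congr
  sat_rename := sat_rename

/-- Closed, so that `elim` creates no free variables. -/
def falsum : GF σ := .gex [0] (.eq 0 0) (.not (.atom (.eq 0 0)))

theorem not_sat_falsum (A : Str σ) (v : ℕ → A.dom) : ¬ (falsum : GF σ).Sat A v := by
  simp [falsum, Sat, Atomic.Sat]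

theorem fv_falsum : (falsum : GF σ).fv = ∅ := by
  simp [falsum, fv, Atomic.vars, Finset.filter_eq_empty_iff]

theorem sig_falsum : (falsum : GF σ).sig = ∅ := by
  simp [falsum, sig, Atomic.sig]

theorem wellGuarded_falsum : (falsum : GF σ).WellGuarded :=
  ⟨subset_rfl, trivial⟩

open Classical in
/-- Interprets the symbols outside `K` as empty. A guard cannot be replaced by `falsum`, so a
quantifier guarded by such a symbol is replaced as a whole. -/
noncomputable def elim (K : Set σ.Rel) : GF σ → GF σ
  | .atom (.eq i j) => .atom (.eq i j)
  | .atom (.rel R t) => if R ∈ K then .atom (.rel R t) else falsum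
  | .not φ => .not (elim K φ)
  | .and φ ψ => .and (elim K φ) (elim K ψ)
  | .or φ ψ => .or (elim K φ) (elim K ψ)
  | .gex ys (.eq i j) φ => .gex ys (.eq i j) (elim K φ)
  | .gex ys (.rel R t) φ => if R ∈ K then .gex ys (.rel R t) (elim K φ) else falsum
  | .gall ys (.eq i j) φ => .gall ys (.eq i j) (elim K φ)
  | .gall ys (.rel R t) φ => if R ∈ K then .gall ys (.rel R t) (elim K φ) else .not falsum

theorem sat_elim (K : Set σ.Rel) (A : Str σ) (φ : GF σ) (v : ℕ → A.dom) :
    (φ.elim K).Sat A v ↔ φ.Sat (A.restrict K) v := by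
  induction φ generalizing v with
  | atom α =>
    cases α with
    | eq i j => rfl
    | rel R t =>
      by_cases hK : R ∈ K <;>
        simp [elim, hK, Sat, Atomic.Sat, Str.restrict, not_sat_falsum]
  | not φ ih => exact not_congr (ih v)
  | and φ ψ ihφ ihψ => exact and_congr (ihφ v) (ihψ v)
  | or φ ψ ihφ ihψ => exact or_congr (ihφ v) (ihψ v)
  | gex ys α φ ih =>
    cases α with
    | eq i j => exact exists_congr fun w => and_congr Iff.rfl (ih _)
    | rel R t =>
      by_cases hK : R ∈ K <;>
        simp [elim, hK, Sat, Atomic.Sat, Str.restrict, not_sat_falsum, ih]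
  | gall ys α φ ih =>
    cases α with
    | eq i j => exact forall_congr' fun w => imp_congr Iff.rfl (ih _)
    | rel R t =>
      by_cases hK : R ∈ K <;>
        simp [elim, hK, Sat, Atomic.Sat, Str.restrict, not_sat_falsum, ih]

theorem sig_elim (K : Set σ.Rel) (φ : GF σ) : (φ.elim K).sig ⊆ φ.sig ∩ K := by
  induction φ with
  | atom α =>
    cases α with
    | eq i j => simp [elim, sig, Atomic.sig]
    | rel R t => by_cases hK : R ∈ K <;> simp [elim, hK, sig, Atomic.sig, sig_falsum]
  | not φ ih => exact ih
  | and φ ψ ihφ ihψ | or φ ψ ihφ ihψ =>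
    exact Set.union_subset (ihφ.trans (by gcongr; exact Set.subset_union_left))
      (ihψ.trans (by gcongr; exact Set.subset_union_right))
  | gex ys α φ ih | gall ys α φ ih =>
    cases α with
    | eq i j =>
      rintro R (hR | hR)
      · exact hR.elim
      · exact ⟨.inr (ih hR).1, (ih hR).2⟩
    | rel S t =>
      by_cases hK : S ∈ K
      · simp only [elim, hK, if_true]
        rintro R (hR | hR)
        · exact ⟨.inl hR, (show R = S from hR) ▸ hK⟩
        · exact ⟨.inr (ih hR).1, (ih hR).2⟩
      · simp [elim, hK, sig, sig_falsum]

theorem fv_elim (K : Set σ.Rel) (φ : GF σ) : (φ.elim K).fv ⊆ φ.fv := by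
  induction φ with
  | atom α =>
    cases α with
    | eq i j => rfl
    | rel R t => by_cases hK : R ∈ K <;> simp [elim, hK, fv_falsum]
  | not φ ih => exact ih
  | and φ ψ ihφ ihψ | or φ ψ ihφ ihψ => exact Finset.union_subset_union ihφ ihψ
  | gex ys α φ ih | gall ys α φ ih =>
    cases α with
    | eq i j => exact Finset.filter_subset_filter _ (Finset.union_subset_union subset_rfl ih)
    | rel R t =>
      by_cases hK : R ∈ K
      · simp only [elim, hK, if_true]
        exact Finset.filter_subset_filter _ (Finset.union_subset_union subset_rfl ih)
      · simp [elim, hK, fv, fv_falsum]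

theorem WellGuarded.elim (K : Set σ.Rel) {φ : GF σ} (hφ : φ.WellGuarded) :
    (φ.elim K).WellGuarded := by
  induction φ with
  | atom α =>
    cases α with
    | eq i j => trivial
    | rel R t => by_cases hK : R ∈ K <;> simp [GF.elim, hK, wellGuarded_falsum, WellGuarded]
  | not φ ih => exact ih hφ
  | and φ ψ ihφ ihψ | or φ ψ ihφ ihψ => exact ⟨ihφ hφ.1, ihψ hφ.2⟩
  | gex ys α φ ih | gall ys α φ ih =>
    cases α with
    | eq i j => exact ⟨(fv_elim K φ).trans hφ.1, ih hφ.2⟩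
    | rel R t =>
      by_cases hK : R ∈ K
      · simp only [GF.elim, hK, if_true]
        exact ⟨(fv_elim K φ).trans hφ.1, ih hφ.2⟩
      · simp [GF.elim, hK, wellGuarded_falsum, WellGuarded]

theorem hasExplicitGFDef_iff_hasGFInterpolant {τ : Set σ.Rel} {ρ : σ.Rel → σ.Rel}
    (h : ∀ R, σ.arity (ρ R) = σ.arity R) {n : ℕ} {φ θ : GF σ} (hρτ : ∀ R ∈ τ, ρ R = R)
    (hinj : Function.Injective ρ) (hfresh : ∀ R ∉ τ, ρ R ∉ φ.sig ∪ θ.sig) :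
    HasExplicitGFDef τ n φ θ ↔
      HasGFInterpolant n (.and φ θ) (.or (.not (φ.rename ρ h)) (θ.rename ρ h)) := by
  have hsig : (GF.and φ θ).sig ∩ (GF.or (.not (φ.rename ρ h)) (θ.rename ρ h)).sig =
      (φ.sig ∪ θ.sig) ∩ ρ '' (φ.sig ∪ θ.sig) := by
    simp only [sig, sig_rename, Set.image_union]
  constructor
  · rintro ⟨ψ, hψwg, hψτ, hψfv, hψ⟩
    refine ⟨ψ.elim (φ.sig ∪ θ.sig), hψwg.elim _, ?_, (fv_elim _ ψ).trans hψfv, ?_, ?_⟩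
    · rw [hsig]
      exact (sig_elim _ ψ).trans <| (Set.inter_subset_inter_left _ hψτ).trans <|
        Set.inter_subset_inter_image_of_fixed hρτ
    · rintro A v ⟨hφ, hθ⟩
      exact (sat_elim _ A ψ v).2
        ((abstractLogic σ).sat_restrict_of_explicitDef hψ subset_rfl hφ hθ)
    · intro A v hψA
      exact not_or_of_imp ((abstractLogic σ).sat_rename_of_explicitDef hρτ hψτ hψ subset_rfl
        ((sat_elim _ A ψ v).1 hψA))
  · rintro ⟨χ, hχwg, hχsig, hχfv, hφθχ, hχφθ⟩
    have hχτ : χ.sig ⊆ τ := (hsig ▸ hχsig).trans (Set.inter_image_subset_of_fresh hρτ hfresh)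
    exact ⟨χ, hχwg, hχτ, hχfv, fun A v hφ =>
      ⟨fun hθ => hφθχ A v ⟨hφ, hθ⟩,
        (abstractLogic σ).sat_of_interpolant hρτ hinj hχτ hχφθ hφ⟩⟩

end GF

namespace Fml

variable {σ : Sig}

theorem sat_congr (A : Str σ) (J : ∀ R, (Fin (σ.arity R) → A.dom) → Prop) (φ : Fml σ)
    (v : ℕ → A.dom) (hJ : ∀ R ∈ φ.sig, ∀ t, A.interp R t ↔ J R t) :
    φ.Sat A v ↔ φ.Sat ⟨A.dom, J⟩ v := by
  induction φ generalizing v with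
  | eq i j => rfl
  | rel R t => exact hJ R rfl _
  | not φ ih => exact not_congr (ih v hJ)
  | and φ ψ ihφ ihψ =>
    exact and_congr (ihφ v fun R hR => hJ R (.inl hR)) (ihψ v fun R hR => hJ R (.inr hR))
  | or φ ψ ihφ ihψ =>
    exact or_congr (ihφ v fun R hR => hJ R (.inl hR)) (ihψ v fun R hR => hJ R (.inr hR))
  | ex x φ ih => exact exists_congr fun d => ih _ hJ
  | all x φ ih => exact forall_congr' fun d => ih _ hJ

theorem sat_rename (ρ : σ.Rel → σ.Rel) (h : ∀ R, σ.arity (ρ R) = σ.arity R) (A : Str σ)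
    (φ : Fml σ) (v : ℕ → A.dom) : (φ.rename ρ h).Sat A v ↔ φ.Sat (A.comap ρ h) v := by
  induction φ generalizing v with
  | eq i j | rel R t => rfl
  | not φ ih => exact not_congr (ih v)
  | and φ ψ ihφ ihψ => exact and_congr (ihφ v) (ihψ v)
  | or φ ψ ihφ ihψ => exact or_congr (ihφ v) (ihψ v)
  | ex x φ ih => exact exists_congr fun d => ih _
  | all x φ ih => exact forall_congr' fun d => ih _

theorem sig_rename (ρ : σ.Rel → σ.Rel) (h : ∀ R, σ.arity (ρ R) = σ.arity R) (φ : Fml σ) :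
    (φ.rename ρ h).sig = ρ '' φ.sig := by
  induction φ <;> simp [rename, sig, Set.image_union, *]

variable (σ) in
def abstractLogic : AbstractLogic σ where
  Form := Fml σ
  Sat A φ v := φ.Sat A v
  sig := sig
  rename := rename
  sat_congr := sat_congr
  sat_rename := sat_rename

def falsum : Fml σ := .ex 0 (.not (.eq 0 0))

theorem not_sat_falsum (A : Str σ) (v : ℕ → A.dom) : ¬ (falsum : Fml σ).Sat A v := by
  simp [falsum, Sat]

theorem isFO2_falsum : IsFO2 (falsum : Fml σ) := by
  simp [IsFO2, falsum, allVars]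

open Classical in
noncomputable def elim (K : Set σ.Rel) : Fml σ → Fml σ
  | .eq i j => .eq i j
  | .rel R t => if R ∈ K then .rel R t else falsum
  | .not φ => .not (elim K φ)
  | .and φ ψ => .and (elim K φ) (elim K ψ)
  | .or φ ψ => .or (elim K φ) (elim K ψ)
  | .ex x φ => .ex x (elim K φ)
  | .all x φ => .all x (elim K φ)

theorem sat_elim (K : Set σ.Rel) (A : Str σ) (φ : Fml σ) (v : ℕ → A.dom) :
    (φ.elim K).Sat A v ↔ φ.Sat (A.restrict K) v := by
  induction φ generalizing v with
  | eq i j => rfl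
  | rel R t => by_cases hK : R ∈ K <;> simp [elim, hK, Sat, Str.restrict, not_sat_falsum]
  | not φ ih => exact not_congr (ih v)
  | and φ ψ ihφ ihψ => exact and_congr (ihφ v) (ihψ v)
  | or φ ψ ihφ ihψ => exact or_congr (ihφ v) (ihψ v)
  | ex x φ ih => exact exists_congr fun d => ih _
  | all x φ ih => exact forall_congr' fun d => ih _

theorem sig_elim (K : Set σ.Rel) (φ : Fml σ) : (φ.elim K).sig ⊆ φ.sig ∩ K := by
  induction φ with
  | eq i j => simp [elim, sig]
  | rel R t => by_cases hK : R ∈ K <;> simp [elim, hK, sig, falsum]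
  | not φ ih | ex x φ ih | all x φ ih => exact ih
  | and φ ψ ihφ ihψ | or φ ψ ihφ ihψ =>
    exact Set.union_subset (ihφ.trans (by gcongr; exact Set.subset_union_left))
      (ihψ.trans (by gcongr; exact Set.subset_union_right))

theorem fv_elim (K : Set σ.Rel) (φ : Fml σ) : (φ.elim K).fv ⊆ φ.fv := by
  induction φ with
  | eq i j => rfl
  | rel R t => by_cases hK : R ∈ K <;> simp [elim, hK, falsum, fv]
  | not φ ih => exact ih
  | and φ ψ ihφ ihψ | or φ ψ ihφ ihψ => exact Finset.union_subset_union ihφ ihψ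
  | ex x φ ih | all x φ ih => exact Finset.erase_subset_erase _ ih

theorem isFO2_elim (K : Set σ.Rel) {φ : Fml σ} (hφ : IsFO2 φ) : IsFO2 (φ.elim K) := by
  induction φ with
  | eq i j => exact hφ
  | rel R t => by_cases hK : R ∈ K <;> simp [elim, hK, hφ, isFO2_falsum]
  | not φ ih => exact ih hφ
  | and φ ψ ihφ ihψ | or φ ψ ihφ ihψ =>
    simp only [IsFO2, elim, allVars, Finset.union_subset_iff] at hφ ⊢
    exact ⟨ihφ hφ.1, ihψ hφ.2⟩
  | ex x φ ih | all x φ ih =>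
    simp only [IsFO2, elim, allVars, Finset.insert_subset_iff] at hφ ⊢
    exact ⟨hφ.1, ih hφ.2⟩

theorem hasExplicitFO2Def_iff_hasFO2Interpolant {τ : Set σ.Rel} {ρ : σ.Rel → σ.Rel}
    (h : ∀ R, σ.arity (ρ R) = σ.arity R) {n : ℕ} {φ θ : Fml σ} (hρτ : ∀ R ∈ τ, ρ R = R)
    (hinj : Function.Injective ρ) (hfresh : ∀ R ∉ τ, ρ R ∉ φ.sig ∪ θ.sig) :
    HasExplicitFO2Def τ n φ θ ↔
      HasFO2Interpolant n (.and φ θ) (.or (.not (φ.rename ρ h)) (θ.rename ρ h)) := by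
  have hsig : (Fml.and φ θ).sig ∩ (Fml.or (.not (φ.rename ρ h)) (θ.rename ρ h)).sig =
      (φ.sig ∪ θ.sig) ∩ ρ '' (φ.sig ∪ θ.sig) := by
    simp only [sig, sig_rename, Set.image_union]
  constructor
  · rintro ⟨ψ, hψ2, hψτ, hψfv, hψ⟩
    refine ⟨ψ.elim (φ.sig ∪ θ.sig), isFO2_elim _ hψ2, ?_, (fv_elim _ ψ).trans hψfv, ?_, ?_⟩
    · rw [hsig]
      exact (sig_elim _ ψ).trans <| (Set.inter_subset_inter_left _ hψτ).trans <|
        Set.inter_subset_inter_image_of_fixed hρτ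
    · rintro A v ⟨hφ, hθ⟩
      exact (sat_elim _ A ψ v).2
        ((abstractLogic σ).sat_restrict_of_explicitDef hψ subset_rfl hφ hθ)
    · intro A v hψA
      exact not_or_of_imp ((abstractLogic σ).sat_rename_of_explicitDef hρτ hψτ hψ subset_rfl
        ((sat_elim _ A ψ v).1 hψA))
  · rintro ⟨χ, hχ2, hχsig, hχfv, hφθχ, hχφθ⟩
    have hχτ : χ.sig ⊆ τ := (hsig ▸ hχsig).trans (Set.inter_image_subset_of_fresh hρτ hfresh)
    exact ⟨χ, hχ2, hχτ, hχfv, fun A v hφ =>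
      ⟨fun hθ => hφθχ A v ⟨hφ, hθ⟩,
        (abstractLogic σ).sat_of_interpolant hρτ hinj hχτ hχφθ hφ⟩⟩

end Fml

/-- For `L` being GF (first conjunct) or FO² (second conjunct):
there is an explicit `L(τ)`-definition of `θ` under the sentence `φ` iff there
is an `L`-interpolant for the pair `(φ ∧ θ(x), φ' → θ'(x))`, where `φ', θ'`
are obtained by renaming every relation symbol not in `τ` (via `ρ`) to a fresh
symbol of the same arity.  This yields a polynomial-time reduction of explicit
`L`-definability to `L`-interpolant existence. -/
theorem explicit_definability_iff_interpolant_of_renaming :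
    (∀ (σ : Sig) (τ : Set σ.Rel) (ρ : σ.Rel → σ.Rel)
      (h : ∀ R, σ.arity (ρ R) = σ.arity R) (n : ℕ) (φ θ : GF σ),
      φ.WellGuarded → θ.WellGuarded → φ.fv = ∅ → θ.fv ⊆ Finset.range n →
      (∀ R ∈ τ, ρ R = R) → Function.Injective ρ →
      (∀ R, R ∉ τ → ρ R ∉ φ.sig ∪ θ.sig ∪ τ) →
      (HasExplicitGFDef τ n φ θ ↔
        HasGFInterpolant n (.and φ θ)
          (.or (.not (φ.rename ρ h)) (θ.rename ρ h)))) ∧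
    (∀ (σ : Sig) (τ : Set σ.Rel) (ρ : σ.Rel → σ.Rel)
      (h : ∀ R, σ.arity (ρ R) = σ.arity R) (n : ℕ) (φ θ : Fml σ), n ≤ 2 →
      IsFO2 φ → IsFO2 θ → φ.fv = ∅ → θ.fv ⊆ Finset.range n →
      (∀ R ∈ τ, ρ R = R) → Function.Injective ρ →
      (∀ R, R ∉ τ → ρ R ∉ φ.sig ∪ θ.sig ∪ τ) →
      (HasExplicitFO2Def τ n φ θ ↔
        HasFO2Interpolant n (.and φ θ)
          (.or (.not (φ.rename ρ h)) (θ.rename ρ h)))) :=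
  ⟨fun _ _ _ h _ _ _ _ _ _ _ hρτ hinj hfresh =>
    GF.hasExplicitGFDef_iff_hasGFInterpolant h hρτ hinj fun R hR hK => hfresh R hR (.inl hK),
  fun _ _ _ h _ _ _ _ _ _ _ _ hρτ hinj hfresh =>
    Fml.hasExplicitFO2Def_iff_hasFO2Interpolant h hρτ hinj fun R hR hK =>
      hfresh R hR (.inl hK)⟩
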